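/- arXiv:2503.02740 — 2 statements merged into one kernel-verified Lean document; each statement's English description precedes it below -/
import Mathlib

section
/- For a profile P_N over the universal domain 𝒰_𝒪, let Õ(P_N) = {i ∈ N : t(P_i) ≠ 𝒪 and 𝒪 P_i S for every S ∈ 2^𝒪 \ {t(P_i), 𝒪}} be the set of voters whose top is not 𝒪 and who rank 𝒪 second. Define the rule f̃ by: f̃(P_N) = t(P_i) if Õ(P_N) is nonempty and all voters in Õ(P_N) have the same top set t(P_i); otherwise f̃(P_N) = 𝒪. Then f̃ satisfies ontoness, false-name-proofness, participation, and object neutrality, but violates tops-onliness. -/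
/-! ## Basic framework: preferences, profiles, voting rules, axioms -/

/-- A preference is a strict linear order on the set `A` of alternatives, encoded as a
`LinearOrder` structure on `A`; alternative `x` is strictly preferred to `y` iff `y < x`
(i.e. "greater is better"). -/
abbrev Pref (A : Type*) := LinearOrder A

/-- Strict preference: `x` is strictly preferred to `y` under `p`. -/
def Pref.pref {A : Type*} (p : Pref A) (x y : A) : Prop := p.lt y x

/-- Weak preference (the weak counterpart `R` of the strict preference `P`):
`x` is weakly preferred to `y` under `p`. -/
def Pref.wpref {A : Type*} (p : Pref A) (x y : A) : Prop := p.le y x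

/-- The top (most preferred) alternative of a preference. -/
noncomputable def Pref.top {A : Type*} [Fintype A] [Nonempty A] (p : Pref A) : A :=
  @Finset.max' A p Finset.univ Finset.univ_nonempty

/-- The bottom (least preferred) alternative of a preference. -/
noncomputable def Pref.bot {A : Type*} [Fintype A] [Nonempty A] (p : Pref A) : A :=
  @Finset.min' A p Finset.univ Finset.univ_nonempty

/-- A profile over the society `N` (a finite set of voters, indexed by naturals):
it assigns a preference to each member of `N`. -/
abbrev Profile (A : Type*) (N : Finset ℕ) := (i : ℕ) → i ∈ N → Pref A

/-- The profile `P` takes values in the domain `D` of preferences. -/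
def Profile.inDomain {A : Type*} {N : Finset ℕ} (P : Profile A N) (D : Set (Pref A)) : Prop :=
  ∀ i (hi : i ∈ N), P i hi ∈ D

/-- A (variable-population) voting rule: it assigns an alternative to every society
together with a profile over it. -/
abbrev Rule (A : Type*) := (N : Finset ℕ) → Profile A N → A

/-- Ontoness on the domain `D`: for every society and every alternative, some
`D`-profile realizes that alternative. -/
def OntoOn {A : Type*} (D : Set (Pref A)) (f : Rule A) : Prop :=
  ∀ N : Finset ℕ, N.Nonempty → ∀ a : A, ∃ P : Profile A N, P.inDomain D ∧ f N P = a

/-- Tops-onliness on the domain `D`: two `D`-profiles with the same tops get the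
same outcome. -/
def TopsOnlyOn {A : Type*} [Fintype A] [Nonempty A] (D : Set (Pref A)) (f : Rule A) : Prop :=
  ∀ N : Finset ℕ, N.Nonempty → ∀ P P' : Profile A N, P.inDomain D → P'.inDomain D →
    (∀ i (hi : i ∈ N), (P i hi).top = (P' i hi).top) → f N P = f N P'

/-- False-name-proofness on the domain `D`: if a voter `i` of the society `N` casts,
under fresh identities `N'`, extra votes identical to her own preference, the outcome
does not improve for her. -/
def FalseNameProofOn {A : Type*} (D : Set (Pref A)) (f : Rule A) : Prop :=
  ∀ N N' : Finset ℕ, N.Nonempty → N'.Nonempty → Disjoint N N' →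
    ∀ P : Profile A (N ∪ N'), P.inDomain D →
      ∀ i (hi : i ∈ N),
        (∀ j (hj : j ∈ N'),
            P j (Finset.mem_union_right N hj) = P i (Finset.mem_union_left N' hi)) →
        (P i (Finset.mem_union_left N' hi)).wpref
          (f N (fun j hj => P j (Finset.mem_union_left N' hj)))
          (f (N ∪ N') P)

/-- Participation on the domain `D`: no voter gains by abstaining. -/
def ParticipationOn {A : Type*} (D : Set (Pref A)) (f : Rule A) : Prop :=
  ∀ N : Finset ℕ, 2 ≤ N.card → ∀ P : Profile A N, P.inDomain D →
    ∀ i (hi : i ∈ N),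
      (P i hi).wpref (f N P) (f (N.erase i) (fun j hj => P j (Finset.mem_of_mem_erase hj)))

lemma mem_of_mem_image_perm {σ : Equiv.Perm ℕ} {N : Finset ℕ} {j : ℕ}
    (hj : j ∈ N.image σ) : σ.symm j ∈ N := by
  obtain ⟨i, hi, rfl⟩ := Finset.mem_image.mp hj
  simpa using hi

/-- The permuted profile `σ(P_N)` over the society `σ(N)`: voter `σ i` gets the
preference `P i`. -/
def permProfile {A : Type*} (σ : Equiv.Perm ℕ) {N : Finset ℕ} (P : Profile A N) :
    Profile A (N.image σ) :=
  fun j hj => P (σ.symm j) (mem_of_mem_image_perm hj)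

/-- Anonymity on the domain `D`: permuting the voters' identities does not change
the outcome. -/
def AnonymousOn {A : Type*} (D : Set (Pref A)) (f : Rule A) : Prop :=
  ∀ (σ : Equiv.Perm ℕ) (N : Finset ℕ), N.Nonempty → ∀ P : Profile A N, P.inDomain D →
    f (N.image σ) (permProfile σ P) = f N P

/-- Relabeling a preference along a permutation `γ` of the alternatives: in the new
preference, `γ x` is strictly preferred to `γ y` iff `x` was strictly preferred to `y`. -/
noncomputable def Pref.relabel {A : Type*} (p : Pref A) (γ : Equiv.Perm A) : Pref A :=
  @LinearOrder.lift' A A p γ.symm γ.symm.injective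

/-- Neutrality on the domain `D`: relabeling the alternatives by a permutation `γ`
relabels the outcome accordingly. -/
def NeutralOn {A : Type*} (D : Set (Pref A)) (f : Rule A) : Prop :=
  ∀ (γ : Equiv.Perm A) (N : Finset ℕ), N.Nonempty → ∀ P : Profile A N, P.inDomain D →
    γ (f N P) = f N (fun i hi => (P i hi).relabel γ)

/-! ## The domain of preferences over subsets of a set `O` of objects -/

/-- Object neutrality: permuting the objects by `μ` (which permutes every subset of
objects pointwise) relabels the outcome accordingly. -/
def ObjectNeutralOn {O : Type*} [Fintype O] [DecidableEq O]
    (D : Set (Pref (Finset O))) (f : Rule (Finset O)) : Prop :=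
  ∀ (μ : Equiv.Perm O) (N : Finset ℕ), N.Nonempty →
    ∀ P : Profile (Finset O) N, P.inDomain D →
      (f N P).image μ = f N (fun i hi => (P i hi).relabel μ.finsetCongr)

/-- A preference over subsets of objects is separable if adding an object `x ∉ S` to a
set `S` improves the set exactly when `{x}` is preferred to `∅`. -/
def Separable {O : Type*} [Fintype O] [DecidableEq O] (p : Pref (Finset O)) : Prop :=
  ∀ (S : Finset O) (x : O), x ∉ S → (p.pref (insert x S) S ↔ p.pref {x} (∅ : Finset O))

/-- The domain of separable preferences over subsets of objects. -/
def SepDom (O : Type*) [Fintype O] [DecidableEq O] : Set (Pref (Finset O)) :=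
  {p | Separable p}

/-- `t(P_N)`: the set of distinct top sets of the profile `P`. -/
noncomputable def distinctTops {O : Type*} [Fintype O] [DecidableEq O] {N : Finset ℕ}
    (P : Profile (Finset O) N) : Finset (Finset O) :=
  N.attach.image fun i => (P i.1 i.2).top

/-- The rule `f^>`: an object is chosen iff it belongs to strictly more than half of the
distinct top sets of the profile. -/
noncomputable def fGt (O : Type*) [Fintype O] [DecidableEq O] : Rule (Finset O) :=
  fun N P =>
    Finset.univ.filter fun x =>
      (distinctTops P).card < 2 * ((distinctTops P).filter fun T => x ∈ T).card

/-- The rule `f^≥`: an object is chosen iff it belongs to at least half of the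
distinct top sets of the profile. -/
noncomputable def fGe (O : Type*) [Fintype O] [DecidableEq O] : Rule (Finset O) :=
  fun N P =>
    Finset.univ.filter fun x =>
      (distinctTops P).card ≤ 2 * ((distinctTops P).filter fun T => x ∈ T).card

/-- `g` is the tops-only extension to the domain `Dbig` (⊇ separable preferences) of the
tops-only rule `f` defined on the separable domain: on every `Dbig`-profile `P`, `g`
agrees with the value of `f` at any separable profile `Q` having the same tops as `P`. -/
def IsTopsOnlyExtensionOn {O : Type*} [Fintype O] [DecidableEq O]
    (Dbig : Set (Pref (Finset O))) (f g : Rule (Finset O)) : Prop :=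
  ∀ N : Finset ℕ, N.Nonempty →
    ∀ P : Profile (Finset O) N, P.inDomain Dbig →
      ∀ Q : Profile (Finset O) N, Q.inDomain (SepDom O) →
        (∀ i (hi : i ∈ N), (P i hi).top = (Q i hi).top) → g N P = f N Q

/-- A preference whose top is not the whole set of objects `𝒪` and which ranks `𝒪`
second (i.e. `𝒪` beats every set other than the top and `𝒪` itself). -/
def ranksUnivSecond {O : Type*} [Fintype O] [DecidableEq O] (p : Pref (Finset O)) : Prop :=
  p.top ≠ (Finset.univ : Finset O) ∧
  ∀ S : Finset O, S ≠ p.top → S ≠ (Finset.univ : Finset O) →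
    p.pref (Finset.univ : Finset O) S

open scoped Classical in
/-- The rule `f̃`: if the set `Õ(P_N)` of voters whose top is not `𝒪` and who rank `𝒪`
second is nonempty and all of them share the same top set `T`, the outcome is `T`;
otherwise the outcome is `𝒪`. -/
noncomputable def fTilde (O : Type*) [Fintype O] [DecidableEq O] : Rule (Finset O) :=
  fun N P =>
    if h : ∃ T : Finset O,
        (∃ i, ∃ hi : i ∈ N, ranksUnivSecond (P i hi) ∧ (P i hi).top = T) ∧
        (∀ j, ∀ hj : j ∈ N, ranksUnivSecond (P j hj) → (P j hj).top = T)
    then h.choose else (Finset.univ : Finset O)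

/-!
`f̃(P_N)` depends only on the set of tops of the voters in `Õ(P_N)`: it is the unique element
of that set when the set is a singleton, and `𝒪` otherwise. Clones of a voter do not change
that set, so false names never change the outcome. A voter outside `Õ` has no influence at
all, while a voter in `Õ` always obtains her top or `𝒪`, her second best, and obtains `𝒪`
only if the outcome without her is not her top either. Whether a voter with top `∅` lies in
`Õ` depends on her second choice, which breaks tops-onliness as soon as `{x} ≠ 𝒪`.
-/

namespace Pref

variable {A : Type*}

lemma wpref_refl (p : Pref A) (x : A) : p.wpref x x := by
  let _ : LinearOrder A := p; exact le_refl x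

lemma wpref_of_pref (p : Pref A) {x y : A} (h : p.pref x y) : p.wpref x y := by
  let _ : LinearOrder A := p; exact le_of_lt h

lemma not_pref_of_pref (p : Pref A) {x y : A} (h : p.pref x y) : ¬ p.pref y x := by
  let _ : LinearOrder A := p; exact lt_asymm h

lemma relabel_pref (p : Pref A) (γ : Equiv.Perm A) (x y : A) :
    (p.relabel γ).pref x y ↔ p.pref (γ.symm x) (γ.symm y) :=
  Iff.rfl

section Top

variable [Fintype A] [Nonempty A]

lemma wpref_top (p : Pref A) (y : A) : p.wpref p.top y := by
  let _ : LinearOrder A := p; exact Finset.le_max' _ y (Finset.mem_univ y)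

lemma top_eq_of_pref (p : Pref A) {x : A} (h : ∀ y, y ≠ x → p.pref x y) : p.top = x := by
  let _ : LinearOrder A := p
  refine le_antisymm (Finset.max'_le _ _ x fun y _ => ?_) (p.wpref_top x)
  rcases eq_or_ne y x with rfl | hy
  · exact le_refl y
  · exact le_of_lt (h y hy)

lemma relabel_top (p : Pref A) (γ : Equiv.Perm A) : (p.relabel γ).top = γ p.top :=
  top_eq_of_pref _ fun y hy => by
    let _ : LinearOrder A := p
    change γ.symm y < γ.symm (γ p.top)
    rw [Equiv.symm_apply_apply]
    exact lt_of_le_of_ne (p.wpref_top _) fun h => hy (by rw [← h, Equiv.apply_symm_apply])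

end Top

section Construction

variable [Fintype A]

/-- A preference ranking alternatives by decreasing `r`, ties broken by an enumeration of `A`. -/
noncomputable def ofRank (r : A → ℕ) : Pref A :=
  LinearOrder.lift' (fun x => toLex (r x, Fintype.equivFin A x)) fun _ _ h =>
    (Fintype.equivFin A).injective (congrArg (fun k => (ofLex k).2) h)

lemma ofRank_pref_of_lt {r : A → ℕ} {x y : A} (h : r y < r x) : (ofRank r).pref x y :=
  Prod.Lex.lt_iff.mpr (Or.inl h)

variable [DecidableEq A]

noncomputable def topSecond (a b : A) : Pref A :=
  ofRank fun S => if S = a then 2 else if S = b then 1 else 0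

lemma topSecond_top [Nonempty A] (a b : A) : (topSecond a b).top = a :=
  top_eq_of_pref _ fun y hy => ofRank_pref_of_lt (by split_ifs <;> simp_all)

lemma topSecond_pref_second {a b y : A} (hb : b ≠ a) (hya : y ≠ a) (hyb : y ≠ b) :
    (topSecond a b).pref b y :=
  ofRank_pref_of_lt (by simp [hb, hya, hyb])

end Construction

end Pref

section Tilde

variable {O : Type*} [Fintype O] [DecidableEq O]

lemma ranksUnivSecond_topSecond {a : Finset O} (ha : a ≠ Finset.univ) :
    ranksUnivSecond (Pref.topSecond a Finset.univ) := by
  refine ⟨by rwa [Pref.topSecond_top], fun S hS hSu => ?_⟩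
  rw [Pref.topSecond_top] at hS
  exact Pref.topSecond_pref_second ha.symm hS hSu

lemma ranksUnivSecond.wpref_univ {p : Pref (Finset O)} (hp : ranksUnivSecond p)
    {S : Finset O} (hS : S ≠ p.top) : p.wpref Finset.univ S := by
  rcases eq_or_ne S Finset.univ with rfl | hSu
  · exact p.wpref_refl _
  · exact p.wpref_of_pref (hp.2 S hS hSu)

lemma ranksUnivSecond_relabel (p : Pref (Finset O)) {γ : Equiv.Perm (Finset O)}
    (hγ : γ Finset.univ = Finset.univ) :
    ranksUnivSecond (p.relabel γ) ↔ ranksUnivSecond p := by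
  have hγ' : γ.symm Finset.univ = Finset.univ := by rw [γ.symm_apply_eq, hγ]
  unfold ranksUnivSecond
  rw [Pref.relabel_top, ← hγ, γ.injective.ne_iff, hγ]
  refine and_congr_right fun _ => γ.symm.forall_congr fun S => ?_
  rw [Pref.relabel_pref, hγ', Ne, Ne, Ne, Ne, Equiv.symm_apply_eq, Equiv.symm_apply_eq, hγ]

/-- `T` is the common top of the voters in `Õ(P_N)`, a nonempty set; this is the condition
in the definition of `fTilde`. -/
def IsCommonTop {N : Finset ℕ} (P : Profile (Finset O) N) (T : Finset O) : Prop :=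
  (∃ i, ∃ hi : i ∈ N, ranksUnivSecond (P i hi) ∧ (P i hi).top = T) ∧
  (∀ j, ∀ hj : j ∈ N, ranksUnivSecond (P j hj) → (P j hj).top = T)

def Profile.restrict {A : Type*} {N M : Finset ℕ} (P : Profile A N) (h : M ⊆ N) :
    Profile A M :=
  fun j hj => P j (h hj)

section CommonTop

variable {N M : Finset ℕ} {P : Profile (Finset O) N}

lemma IsCommonTop.unique {T T' : Finset O} (h : IsCommonTop P T) (h' : IsCommonTop P T') :
    T = T' := by
  obtain ⟨⟨i, hi, hr, rfl⟩, -⟩ := h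
  exact h'.2 i hi hr

lemma fTilde_eq_of_isCommonTop {T : Finset O} (h : IsCommonTop P T) : fTilde O N P = T := by
  have hex : ∃ T, IsCommonTop P T := ⟨T, h⟩
  exact (dif_pos hex).trans (hex.choose_spec.unique h)

lemma fTilde_eq_univ (h : ∀ T, ¬ IsCommonTop P T) : fTilde O N P = Finset.univ :=
  dif_neg fun ⟨T, hT⟩ => h T hT

lemma fTilde_congr {Q : Profile (Finset O) M} (h : ∀ T, IsCommonTop P T ↔ IsCommonTop Q T) :
    fTilde O N P = fTilde O M Q := by
  by_cases hP : ∃ T, IsCommonTop P T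
  · obtain ⟨T, hT⟩ := hP
    rw [fTilde_eq_of_isCommonTop hT, fTilde_eq_of_isCommonTop ((h T).mp hT)]
  · push Not at hP
    rw [fTilde_eq_univ hP, fTilde_eq_univ fun T hT => hP T ((h T).mpr hT)]

lemma fTilde_eq_univ_or_exists_top :
    fTilde O N P = Finset.univ ∨
      ∃ i, ∃ hi : i ∈ N, ranksUnivSecond (P i hi) ∧ (P i hi).top = fTilde O N P := by
  by_cases hP : ∃ T, IsCommonTop P T
  · obtain ⟨T, hT⟩ := hP
    rw [fTilde_eq_of_isCommonTop hT]
    exact Or.inr hT.1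
  · push Not at hP
    exact Or.inl (fTilde_eq_univ hP)

lemma fTilde_eq_top_or_univ {i : ℕ} (hi : i ∈ N) (hr : ranksUnivSecond (P i hi)) :
    fTilde O N P = (P i hi).top ∨ fTilde O N P = Finset.univ := by
  by_cases hP : ∃ T, IsCommonTop P T
  · obtain ⟨T, hT⟩ := hP
    rw [fTilde_eq_of_isCommonTop hT, hT.2 i hi hr]
    exact Or.inl rfl
  · push Not at hP
    exact Or.inr (fTilde_eq_univ hP)

lemma fTilde_eq_univ_of_forall_not (h : ∀ i (hi : i ∈ N), ¬ ranksUnivSecond (P i hi)) :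
    fTilde O N P = Finset.univ :=
  fTilde_eq_univ fun _ ⟨⟨i, hi, hr, _⟩, _⟩ => h i hi hr

lemma fTilde_eq_top_of_forall_eq (hN : N.Nonempty) {p : Pref (Finset O)}
    (hP : ∀ i (hi : i ∈ N), P i hi = p) (hp : ranksUnivSecond p) : fTilde O N P = p.top := by
  obtain ⟨i, hi⟩ := hN
  refine fTilde_eq_of_isCommonTop ⟨⟨i, hi, ?_, by rw [hP]⟩, fun j hj _ => by rw [hP]⟩
  rwa [hP]

lemma fTilde_restrict (h : M ⊆ N)
    (hcover : ∀ j (hj : j ∈ N), j ∉ M → ranksUnivSecond (P j hj) →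
      ∃ k, ∃ hk : k ∈ M, ranksUnivSecond (P k (h hk)) ∧ (P k (h hk)).top = (P j hj).top) :
    fTilde O M (P.restrict h) = fTilde O N P := by
  refine fTilde_congr fun T => ⟨fun ⟨⟨i, hi, hr, ht⟩, hall⟩ => ?_, fun ⟨⟨i, hi, hr, ht⟩, hall⟩ => ?_⟩
  · refine ⟨⟨i, h hi, hr, ht⟩, fun j hj hjr => ?_⟩
    by_cases hjM : j ∈ M
    · exact hall j hjM hjr
    · obtain ⟨k, hk, hkr, hkt⟩ := hcover j hj hjM hjr
      rw [← hkt]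
      exact hall k hk hkr
  · refine ⟨?_, fun j hj hjr => hall j (h hj) hjr⟩
    by_cases hiM : i ∈ M
    · exact ⟨i, hiM, hr, ht⟩
    · obtain ⟨k, hk, hkr, hkt⟩ := hcover i hi hiM hr
      exact ⟨k, hk, hkr, hkt.trans ht⟩

lemma fTilde_relabel (P : Profile (Finset O) N) {γ : Equiv.Perm (Finset O)}
    (hγ : γ Finset.univ = Finset.univ) :
    fTilde O N (fun i hi => (P i hi).relabel γ) = γ (fTilde O N P) := by
  have hiff : ∀ T, IsCommonTop (fun i hi => (P i hi).relabel γ) (γ T) ↔ IsCommonTop P T := by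
    intro T
    simp only [IsCommonTop, ranksUnivSecond_relabel _ hγ, Pref.relabel_top,
      γ.injective.eq_iff]
  by_cases hP : ∃ T, IsCommonTop P T
  · obtain ⟨T, hT⟩ := hP
    rw [fTilde_eq_of_isCommonTop hT, fTilde_eq_of_isCommonTop ((hiff T).mpr hT)]
  · push Not at hP
    rw [fTilde_eq_univ hP, hγ]
    refine fTilde_eq_univ fun T hT => hP (γ.symm T) ((hiff _).mp ?_)
    rwa [γ.apply_symm_apply]

end CommonTop

theorem fTilde_onto : OntoOn Set.univ (fTilde O) := by
  intro N hN a
  rcases eq_or_ne a Finset.univ with rfl | ha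
  · refine ⟨fun _ _ => Pref.topSecond Finset.univ ∅, fun _ _ => trivial, ?_⟩
    exact fTilde_eq_univ_of_forall_not fun _ _ hr => hr.1 (Pref.topSecond_top _ _)
  · refine ⟨fun _ _ => Pref.topSecond a Finset.univ, fun _ _ => trivial, ?_⟩
    rw [fTilde_eq_top_of_forall_eq hN (fun _ _ => rfl) (ranksUnivSecond_topSecond ha),
      Pref.topSecond_top]

theorem fTilde_falseNameProof : FalseNameProofOn Set.univ (fTilde O) := by
  intro N N' _ _ _ P _ i hi hclones
  have hrestrict := fTilde_restrict (P := P) Finset.subset_union_left fun j hj hjN hjr => by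
    have hjN' := (Finset.mem_union.mp hj).resolve_left hjN
    rw [hclones j hjN'] at hjr ⊢
    exact ⟨i, hi, hjr, rfl⟩
  exact hrestrict ▸ Pref.wpref_refl _ _

theorem fTilde_participation : ParticipationOn Set.univ (fTilde O) := by
  intro N _ P _ i hi
  have hsub : N.erase i ⊆ N := Finset.erase_subset i N
  have hrest : ∀ j (hj : j ∈ N), j ∉ N.erase i → j = i := fun j hj hji => by
    simpa [hj] using hji
  by_cases hr : ranksUnivSecond (P i hi)
  · rcases fTilde_eq_top_or_univ hi hr with htop | huniv
    · exact htop ▸ Pref.wpref_top _ _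
    rw [huniv]
    -- If the outcome without `i` were her top, another voter of `Õ` would share that top,
    -- and then adding `i` would not change the outcome.
    refine hr.wpref_univ fun habs => hr.1 ?_
    rcases fTilde_eq_univ_or_exists_top (P := P.restrict hsub) with hu | ⟨k, hk, hkr, hkt⟩
    · exact habs ▸ hu
    · have hsame := fTilde_restrict hsub fun j hj hji _ => by
        obtain rfl := hrest j hj hji
        exact ⟨k, hk, hkr, hkt.trans habs⟩
      rw [← huniv, ← hsame]
      exact habs.symm
  · have hsame := fTilde_restrict hsub fun j hj hji hjr => by
      obtain rfl := hrest j hj hji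
      exact absurd hjr hr
    exact hsame ▸ Pref.wpref_refl _ _

theorem fTilde_objectNeutral : ObjectNeutralOn Set.univ (fTilde O) := by
  intro μ N _ P _
  rw [fTilde_relabel P (by rw [Equiv.finsetCongr_apply, Finset.map_univ_equiv]),
    Equiv.finsetCongr_apply, Finset.map_eq_image]
  rfl

theorem fTilde_not_topsOnly (hO : 2 ≤ Fintype.card O) : ¬ TopsOnlyOn Set.univ (fTilde O) := by
  obtain ⟨x, y, hxy⟩ := Fintype.one_lt_card_iff.mp hO
  have huniv : (Finset.univ : Finset O) ≠ ∅ := (Finset.univ_nonempty_iff.mpr ⟨x⟩).ne_empty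
  have hx : ({x} : Finset O) ≠ Finset.univ := fun h =>
    hxy (Finset.mem_singleton.mp (h ▸ Finset.mem_univ y)).symm
  have hx_second : ¬ ranksUnivSecond (Pref.topSecond ∅ ({x} : Finset O)) := fun hr =>
    (Pref.topSecond _ _).not_pref_of_pref
      (Pref.topSecond_pref_second (Finset.singleton_ne_empty x) huniv hx.symm)
      (hr.2 {x} (by rw [Pref.topSecond_top]; exact Finset.singleton_ne_empty x) hx)
  intro htops
  have := htops {0} (Finset.singleton_nonempty 0)
    (fun _ _ => Pref.topSecond ∅ Finset.univ) (fun _ _ => Pref.topSecond ∅ {x})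
    (fun _ _ => trivial) (fun _ _ => trivial) (fun _ _ => by simp only [Pref.topSecond_top])
  rw [fTilde_eq_top_of_forall_eq (Finset.singleton_nonempty 0) (fun _ _ => rfl)
      (ranksUnivSecond_topSecond huniv.symm), Pref.topSecond_top,
    fTilde_eq_univ_of_forall_not fun _ _ => hx_second] at this
  exact huniv this.symm

end Tilde

/-- For at least two objects, the rule `f̃` satisfies ontoness,
false-name-proofness, participation and object neutrality, but violates tops-onliness. -/
theorem stmt_15 {O : Type*} [Fintype O] [DecidableEq O] (hO : 2 ≤ Fintype.card O) :
    OntoOn Set.univ (fTilde O) ∧ FalseNameProofOn Set.univ (fTilde O) ∧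
    ParticipationOn Set.univ (fTilde O) ∧ ObjectNeutralOn Set.univ (fTilde O) ∧
    ¬ TopsOnlyOn Set.univ (fTilde O) :=
  ⟨fTilde_onto, fTilde_falseNameProof, fTilde_participation, fTilde_objectNeutral,
    fTilde_not_topsOnly hO⟩
end

section
/- The rule f^min on the universal domain 𝒰_𝒪 defined by f^min(P_N) = t(P_{min N}), i.e., the top set of the voter with the minimum index in the society, satisfies ontoness, tops-onliness, participation, and object neutrality, but violates false-name-proofness. -/
/-- The rule `f^min`: it selects the top set of the voter with the minimum index in the
society. -/
noncomputable def fMin (O : Type*) [Fintype O] [DecidableEq O] : Rule (Finset O) :=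
  fun N P =>
    if h : N.Nonempty then (P (N.min' h) (N.min'_mem h)).top else (∅ : Finset O)

/-! `f^min` is a dictatorship of the lowest-indexed voter. Joining or leaving a society
can only change who that voter is when the voter joining or leaving is the new or old
minimum, and then the outcome becomes, or was, that voter's own top; this gives
participation. False names break this: a voter can clone herself under indices below
the current minimum and so become the dictator. -/

section Pref

variable {A : Type*} [Fintype A] [Nonempty A]

lemma Pref.le_top (p : Pref A) (b : A) : p.le b p.top :=
  @Finset.le_max' A p _ b (Finset.mem_univ b)

lemma Pref.top_eq_of_forall_le (p : Pref A) {a : A} (h : ∀ b, p.le b a) : p.top = a :=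
  p.le_antisymm _ _ (@Finset.max'_le A p _ _ a fun b _ => h b) (p.le_top a)

lemma Pref.eq_top_of_top_le (p : Pref A) {b : A} (h : p.le p.top b) : b = p.top :=
  p.le_antisymm _ _ (p.le_top b) h

lemma Pref.top_relabel (p : Pref A) (γ : Equiv.Perm A) : (p.relabel γ).top = γ p.top :=
  Pref.top_eq_of_forall_le _ fun b => by
    change p.le (γ.symm b) (γ.symm (γ p.top))
    rw [Equiv.symm_apply_apply]
    exact p.le_top _

lemma Pref.exists_top_eq [DecidableEq A] (a : A) : ∃ p : Pref A, p.top = a := by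
  let p : Pref A := LinearOrder.lift' (Fintype.equivFin A) (Fintype.equivFin A).injective
  exact ⟨p.relabel (Equiv.swap p.top a), by rw [Pref.top_relabel, Equiv.swap_apply_left]⟩

end Pref

section fMin

variable {O : Type*} [Fintype O] [DecidableEq O]

lemma fMin_eq_top_of_forall_le {N : Finset ℕ} (P : Profile (Finset O) N) {m : ℕ} (hm : m ∈ N)
    (hle : ∀ j ∈ N, m ≤ j) : fMin O N P = (P m hm).top := by
  have hN : N.Nonempty := ⟨m, hm⟩
  have hmin : N.min' hN = m := le_antisymm (N.min'_le m hm) (N.le_min' hN m hle)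
  subst hmin
  exact dif_pos hN

lemma fMin_eq_top_min' {N : Finset ℕ} (hN : N.Nonempty) (P : Profile (Finset O) N) :
    fMin O N P = (P (N.min' hN) (N.min'_mem hN)).top :=
  dif_pos hN

lemma fMin_erase_of_ne_min' {N : Finset ℕ} (hN : N.Nonempty) (P : Profile (Finset O) N)
    {i : ℕ} (hi : i ≠ N.min' hN) :
    fMin O (N.erase i) (fun j hj => P j (Finset.mem_of_mem_erase hj)) = fMin O N P := by
  rw [fMin_eq_top_min' hN,
    fMin_eq_top_of_forall_le _ (Finset.mem_erase.mpr ⟨hi.symm, N.min'_mem hN⟩)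
      fun j hj => N.min'_le j (Finset.mem_of_mem_erase hj)]

theorem ontoOn_fMin : OntoOn Set.univ (fMin O) := by
  intro N hN S
  obtain ⟨p, hp⟩ := Pref.exists_top_eq S
  exact ⟨fun _ _ => p, fun _ _ => Set.mem_univ _, by rw [fMin_eq_top_min' hN, hp]⟩

theorem topsOnlyOn_fMin (D : Set (Pref (Finset O))) : TopsOnlyOn D (fMin O) := by
  intro N hN P P' _ _ htops
  rw [fMin_eq_top_min' hN, fMin_eq_top_min' hN, htops]

theorem participationOn_fMin (D : Set (Pref (Finset O))) : ParticipationOn D (fMin O) := by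
  intro N hcard P _ i hi
  have hN : N.Nonempty := Finset.card_pos.mp (by omega)
  by_cases hmin : i = N.min' hN
  · subst hmin
    rw [fMin_eq_top_min' hN]
    exact (P _ hi).le_top _
  · rw [fMin_erase_of_ne_min' hN P hmin]
    exact (P i hi).le_refl _

theorem objectNeutralOn_fMin (D : Set (Pref (Finset O))) : ObjectNeutralOn D (fMin O) := by
  intro μ N hN P _
  rw [fMin_eq_top_min' hN, fMin_eq_top_min' hN, Pref.top_relabel, Equiv.finsetCongr_apply,
    Finset.map_eq_image, Equiv.coe_toEmbedding]

/-- Voter `2` of the society `{1, 2}` wants `{x}` while the dictator `1` wants `∅`; by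
voting a second time as `0`, voter `2` becomes the dictator. -/
theorem not_falseNameProofOn_fMin [Nonempty O] : ¬ FalseNameProofOn Set.univ (fMin O) := by
  intro hfnp
  obtain ⟨x⟩ := ‹Nonempty O›
  obtain ⟨pEmpty, hpEmpty⟩ := Pref.exists_top_eq (∅ : Finset O)
  obtain ⟨pX, hpX⟩ := Pref.exists_top_eq ({x} : Finset O)
  let P : Profile (Finset O) ({1, 2} ∪ {0}) := fun j _ => if j = 1 then pEmpty else pX
  have hbefore : fMin O {1, 2} (fun j hj => P j (Finset.mem_union_left _ hj)) = ∅ :=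
    (fMin_eq_top_of_forall_le (m := 1) _ (by decide) (by decide)).trans hpEmpty
  have hafter : fMin O ({1, 2} ∪ {0}) P = {x} :=
    (fMin_eq_top_of_forall_le (m := 0) _ (by decide) fun j _ => j.zero_le).trans hpX
  have hworse := hfnp {1, 2} {0} (by decide) (by decide) (by decide) P
    (fun _ _ => Set.mem_univ _) 2 (by decide) fun j hj => by
      obtain rfl := Finset.mem_singleton.mp hj
      rfl
  rw [hbefore, hafter] at hworse
  exact Finset.singleton_ne_empty x ((pX.eq_top_of_top_le (hpX ▸ hworse)).trans hpX).symm

end fMin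

/-- For at least two objects, the rule `f^min` satisfies ontoness,
tops-onliness, participation and object neutrality, but violates false-name-proofness. -/
theorem stmt_16 {O : Type*} [Fintype O] [DecidableEq O] (hO : 2 ≤ Fintype.card O) :
    OntoOn Set.univ (fMin O) ∧ TopsOnlyOn Set.univ (fMin O) ∧
    ParticipationOn Set.univ (fMin O) ∧ ObjectNeutralOn Set.univ (fMin O) ∧
    ¬ FalseNameProofOn Set.univ (fMin O) :=
  have : Nonempty O := Fintype.card_pos_iff.mp (by omega)
  ⟨ontoOn_fMin, topsOnlyOn_fMin _, participationOn_fMin _, objectNeutralOn_fMin _,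
    not_falseNameProofOn_fMin⟩
end
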